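/- Let A be a finite-dimensional associative ℚ-algebra with basis t₁, …, t₁₄ and structure constants given by the matrices M₁ = I, M₂, M₄, M₆ (explicit, from the paper) together with the stated polynomial expressions for the remaining M_j, for the left cell A₁ of W(H₄). Then the derived subspace [A, A] = span{rs − sr : r, s ∈ A} has dimension 3 over ℚ. -/
import Mathlib


open Polynomial Matrix

def M2 : Matrix (Fin 14) (Fin 14) ℚ :=
  !![0, 1, 0, 0, 0, 0, 0, 0, 0, 0, 0, 0, 0, 0;
  1, 0, 1, 0, 0, 0, 0, 0, 0, 0, 0, 0, 0, 0;
  0, 1, 1, 1, 0, 0, 0, 0, 0, 0, 0, 0, 0, 0;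
  0, 0, 1, 1, 1, 1, 0, 0, 0, 0, 0, 0, 0, 0;
  0, 0, 0, 1, 0, 0, 1, 0, 0, 0, 0, 0, 0, 0;
  0, 0, 0, 1, 0, 1, 0, 1, 1, 0, 0, 0, 0, 0;
  0, 0, 0, 0, 1, 0, 0, 0, 1, 0, 0, 0, 0, 0;
  0, 0, 0, 0, 0, 1, 0, 0, 0, 1, 0, 0, 0, 0;
  0, 0, 0, 0, 0, 1, 1, 0, 1, 0, 1, 0, 0, 0;
  0, 0, 0, 0, 0, 0, 0, 1, 0, 0, 1, 0, 0, 0;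
  0, 0, 0, 0, 0, 0, 0, 0, 1, 1, 1, 1, 0, 0;
  0, 0, 0, 0, 0, 0, 0, 0, 0, 0, 1, 1, 1, 0;
  0, 0, 0, 0, 0, 0, 0, 0, 0, 0, 0, 1, 0, 1;
  0, 0, 0, 0, 0, 0, 0, 0, 0, 0, 0, 0, 1, 0]
def M4 : Matrix (Fin 14) (Fin 14) ℚ :=
  !![0, 0, 0, 1, 0, 0, 0, 0, 0, 0, 0, 0, 0, 0;
  0, 0, 1, 1, 1, 1, 0, 0, 0, 0, 0, 0, 0, 0;
  0, 1, 2, 3, 1, 2, 1, 1, 1, 0, 0, 0, 0, 0;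
  1, 1, 3, 4, 2, 4, 1, 1, 3, 1, 1, 0, 0, 0;
  0, 1, 1, 2, 0, 2, 1, 1, 1, 0, 1, 0, 0, 0;
  0, 1, 2, 4, 2, 4, 2, 2, 4, 1, 3, 1, 0, 0;
  0, 0, 1, 1, 1, 2, 0, 1, 2, 1, 1, 1, 0, 0;
  0, 0, 1, 1, 1, 2, 1, 0, 2, 1, 1, 1, 0, 0;
  0, 0, 1, 3, 1, 4, 2, 2, 4, 2, 4, 2, 1, 0;
  0, 0, 0, 1, 0, 1, 1, 1, 2, 0, 2, 1, 1, 0;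
  0, 0, 0, 1, 1, 3, 1, 1, 4, 2, 4, 3, 1, 1;
  0, 0, 0, 0, 0, 1, 1, 1, 2, 1, 3, 2, 1, 0;
  0, 0, 0, 0, 0, 0, 0, 0, 1, 1, 1, 1, 0, 0;
  0, 0, 0, 0, 0, 0, 0, 0, 0, 0, 1, 0, 0, 0]
def M6 : Matrix (Fin 14) (Fin 14) ℚ :=
  !![0, 0, 0, 0, 0, 1, 0, 0, 0, 0, 0, 0, 0, 0;
  0, 0, 0, 1, 0, 1, 1, 0, 1, 0, 0, 0, 0, 0;
  0, 0, 1, 2, 1, 3, 1, 1, 2, 1, 1, 0, 0, 0;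
  0, 1, 2, 4, 2, 4, 2, 2, 4, 1, 3, 1, 0, 0;
  0, 0, 1, 2, 1, 2, 0, 1, 2, 1, 1, 1, 0, 0;
  1, 1, 3, 4, 2, 5, 2, 2, 5, 2, 4, 2, 1, 0;
  0, 1, 1, 2, 0, 2, 1, 1, 2, 1, 2, 1, 0, 0;
  0, 0, 1, 2, 1, 2, 1, 1, 2, 0, 2, 1, 1, 0;
  0, 1, 2, 4, 2, 5, 2, 2, 5, 2, 4, 3, 1, 1;
  0, 0, 1, 1, 1, 2, 1, 0, 2, 1, 2, 1, 0, 0;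
  0, 0, 1, 3, 1, 4, 2, 2, 4, 2, 4, 2, 1, 0;
  0, 0, 0, 1, 1, 2, 1, 1, 3, 1, 2, 1, 0, 0;
  0, 0, 0, 0, 0, 1, 0, 1, 1, 0, 1, 0, 0, 0;
  0, 0, 0, 0, 0, 0, 0, 0, 1, 0, 0, 0, 0, 0]

def M1 : Matrix (Fin 14) (Fin 14) ℚ := 1
def M3 : Matrix (Fin 14) (Fin 14) ℚ := -1 + M2 ^ 2
def M5 : Matrix (Fin 14) (Fin 14) ℚ := 1 - M4 - M6 - M2 ^ 2 + M2 * M4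
def M7 : Matrix (Fin 14) (Fin 14) ℚ :=
  1 - M2 - 2 * M4 - M2 ^ 2 - M2 * M4 - M6 * M2 + M2 ^ 2 * M4
def M8 : Matrix (Fin 14) (Fin 14) ℚ :=
  1 - M2 - 2 * M4 - M2 ^ 2 - M2 * M4 - M2 * M6 + M2 ^ 2 * M4
def M9 : Matrix (Fin 14) (Fin 14) ℚ :=
  -1 + M2 + M4 - M6 + M2 ^ 2 + M2 * M4 + M2 * M6 + M6 * M2 - M2 ^ 2 * M4
def M10 : Matrix (Fin 14) (Fin 14) ℚ :=
  1 - 2 * M2 - 3 * M4 + 2 * M6 - 2 * M2 ^ 2 - 4 * M2 * M4 - 2 * M2 * M6 +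
    2 * M4 ^ 2 + M4 * M6 - 2 * M6 * M2 + 3 * M2 ^ 2 * M4 - M2 * M4 ^ 2
def M11 : Matrix (Fin 14) (Fin 14) ℚ :=
  2 * M4 - M6 + M2 * M4 - M4 ^ 2 - M4 * M6 - 2 * M2 ^ 2 * M4 + M2 * M4 ^ 2
def M12 : Matrix (Fin 14) (Fin 14) ℚ :=
  -1 + M2 - M4 + 3 * M6 + 2 * M2 ^ 2 - M2 * M4 + M4 ^ 2 + 3 * M4 * M6 +
    3 * M2 ^ 2 * M4 - 2 * M2 * M4 ^ 2
def M13 : Matrix (Fin 14) (Fin 14) ℚ :=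
  1 + M4 - 4 * M6 - 2 * M2 ^ 2 + 3 * M2 * M4 + M2 * M6 - 2 * M4 ^ 2 -
    4 * M4 * M6 + M6 * M2 + M6 ^ 2 - 3 * M2 ^ 2 * M4 + 2 * M2 * M4 ^ 2
def M14 : Matrix (Fin 14) (Fin 14) ℚ :=
  2 - M2 + M4 - 6 * M6 - 2 * M2 ^ 2 + 4 * M2 * M4 + M2 * M6 - 2 * M4 ^ 2 -
    6 * M4 * M6 + M6 * M2 - 2 * M6 ^ 2 - 5 * M2 ^ 2 * M4 + 3 * M2 * M4 ^ 2 +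
    M2 * M6 ^ 2

/-- The family of all fourteen structure–constant matrices. -/
def MJ : Fin 14 → Matrix (Fin 14) (Fin 14) ℚ :=
  ![M1, M2, M3, M4, M5, M6, M7, M8, M9, M10, M11, M12, M13, M14]

/-- The multiplication of J(A₁): tᵢ · tⱼ = Σ_k (Mᵢ)_(j,k) t_k, extended bilinearly. -/
def mulJ (a b : Fin 14 → ℚ) : Fin 14 → ℚ :=
  fun k => ∑ i : Fin 14, ∑ j : Fin 14, a i * b j * MJ i j k

/-- The basis vectors t₁, …, t₁₄ (zero-indexed). -/
def t (i : Fin 14) : Fin 14 → ℚ := Pi.single i 1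

set_option maxHeartbeats 2000000

def z2 : Matrix (Fin 14) (Fin 14) ℤ :=
  !![0, 1, 0, 0, 0, 0, 0, 0, 0, 0, 0, 0, 0, 0;
  1, 0, 1, 0, 0, 0, 0, 0, 0, 0, 0, 0, 0, 0;
  0, 1, 1, 1, 0, 0, 0, 0, 0, 0, 0, 0, 0, 0;
  0, 0, 1, 1, 1, 1, 0, 0, 0, 0, 0, 0, 0, 0;
  0, 0, 0, 1, 0, 0, 1, 0, 0, 0, 0, 0, 0, 0;
  0, 0, 0, 1, 0, 1, 0, 1, 1, 0, 0, 0, 0, 0;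
  0, 0, 0, 0, 1, 0, 0, 0, 1, 0, 0, 0, 0, 0;
  0, 0, 0, 0, 0, 1, 0, 0, 0, 1, 0, 0, 0, 0;
  0, 0, 0, 0, 0, 1, 1, 0, 1, 0, 1, 0, 0, 0;
  0, 0, 0, 0, 0, 0, 0, 1, 0, 0, 1, 0, 0, 0;
  0, 0, 0, 0, 0, 0, 0, 0, 1, 1, 1, 1, 0, 0;
  0, 0, 0, 0, 0, 0, 0, 0, 0, 0, 1, 1, 1, 0;
  0, 0, 0, 0, 0, 0, 0, 0, 0, 0, 0, 1, 0, 1;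
  0, 0, 0, 0, 0, 0, 0, 0, 0, 0, 0, 0, 1, 0]

def z4 : Matrix (Fin 14) (Fin 14) ℤ :=
  !![0, 0, 0, 1, 0, 0, 0, 0, 0, 0, 0, 0, 0, 0;
  0, 0, 1, 1, 1, 1, 0, 0, 0, 0, 0, 0, 0, 0;
  0, 1, 2, 3, 1, 2, 1, 1, 1, 0, 0, 0, 0, 0;
  1, 1, 3, 4, 2, 4, 1, 1, 3, 1, 1, 0, 0, 0;
  0, 1, 1, 2, 0, 2, 1, 1, 1, 0, 1, 0, 0, 0;
  0, 1, 2, 4, 2, 4, 2, 2, 4, 1, 3, 1, 0, 0;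
  0, 0, 1, 1, 1, 2, 0, 1, 2, 1, 1, 1, 0, 0;
  0, 0, 1, 1, 1, 2, 1, 0, 2, 1, 1, 1, 0, 0;
  0, 0, 1, 3, 1, 4, 2, 2, 4, 2, 4, 2, 1, 0;
  0, 0, 0, 1, 0, 1, 1, 1, 2, 0, 2, 1, 1, 0;
  0, 0, 0, 1, 1, 3, 1, 1, 4, 2, 4, 3, 1, 1;
  0, 0, 0, 0, 0, 1, 1, 1, 2, 1, 3, 2, 1, 0;
  0, 0, 0, 0, 0, 0, 0, 0, 1, 1, 1, 1, 0, 0;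
  0, 0, 0, 0, 0, 0, 0, 0, 0, 0, 1, 0, 0, 0]

def z6 : Matrix (Fin 14) (Fin 14) ℤ :=
  !![0, 0, 0, 0, 0, 1, 0, 0, 0, 0, 0, 0, 0, 0;
  0, 0, 0, 1, 0, 1, 1, 0, 1, 0, 0, 0, 0, 0;
  0, 0, 1, 2, 1, 3, 1, 1, 2, 1, 1, 0, 0, 0;
  0, 1, 2, 4, 2, 4, 2, 2, 4, 1, 3, 1, 0, 0;
  0, 0, 1, 2, 1, 2, 0, 1, 2, 1, 1, 1, 0, 0;
  1, 1, 3, 4, 2, 5, 2, 2, 5, 2, 4, 2, 1, 0;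
  0, 1, 1, 2, 0, 2, 1, 1, 2, 1, 2, 1, 0, 0;
  0, 0, 1, 2, 1, 2, 1, 1, 2, 0, 2, 1, 1, 0;
  0, 1, 2, 4, 2, 5, 2, 2, 5, 2, 4, 3, 1, 1;
  0, 0, 1, 1, 1, 2, 1, 0, 2, 1, 2, 1, 0, 0;
  0, 0, 1, 3, 1, 4, 2, 2, 4, 2, 4, 2, 1, 0;
  0, 0, 0, 1, 1, 2, 1, 1, 3, 1, 2, 1, 0, 0;
  0, 0, 0, 0, 0, 1, 0, 1, 1, 0, 1, 0, 0, 0;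
  0, 0, 0, 0, 0, 0, 0, 0, 1, 0, 0, 0, 0, 0]

def p22 : Matrix (Fin 14) (Fin 14) ℤ :=
  !![1, 0, 1, 0, 0, 0, 0, 0, 0, 0, 0, 0, 0, 0;
  0, 2, 1, 1, 0, 0, 0, 0, 0, 0, 0, 0, 0, 0;
  1, 1, 3, 2, 1, 1, 0, 0, 0, 0, 0, 0, 0, 0;
  0, 1, 2, 4, 1, 2, 1, 1, 1, 0, 0, 0, 0, 0;
  0, 0, 1, 1, 2, 1, 0, 0, 1, 0, 0, 0, 0, 0;
  0, 0, 1, 2, 1, 4, 1, 1, 2, 1, 1, 0, 0, 0;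
  0, 0, 0, 1, 0, 1, 2, 0, 1, 0, 1, 0, 0, 0;
  0, 0, 0, 1, 0, 1, 0, 2, 1, 0, 1, 0, 0, 0;
  0, 0, 0, 1, 1, 2, 1, 1, 4, 1, 2, 1, 0, 0;
  0, 0, 0, 0, 0, 1, 0, 0, 1, 2, 1, 1, 0, 0;
  0, 0, 0, 0, 0, 1, 1, 1, 2, 1, 4, 2, 1, 0;
  0, 0, 0, 0, 0, 0, 0, 0, 1, 1, 2, 3, 1, 1;
  0, 0, 0, 0, 0, 0, 0, 0, 0, 0, 1, 1, 2, 0;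
  0, 0, 0, 0, 0, 0, 0, 0, 0, 0, 0, 1, 0, 1]

def p24 : Matrix (Fin 14) (Fin 14) ℤ :=
  !![0, 0, 1, 1, 1, 1, 0, 0, 0, 0, 0, 0, 0, 0;
  0, 1, 2, 4, 1, 2, 1, 1, 1, 0, 0, 0, 0, 0;
  1, 2, 6, 8, 4, 7, 2, 2, 4, 1, 1, 0, 0, 0;
  1, 4, 8, 13, 5, 12, 5, 5, 9, 2, 5, 1, 0, 0;
  1, 1, 4, 5, 3, 6, 1, 2, 5, 2, 2, 1, 0, 0;
  1, 2, 7, 12, 6, 14, 6, 5, 13, 5, 9, 4, 1, 0;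
  0, 1, 2, 5, 1, 6, 3, 3, 5, 2, 5, 2, 1, 0;
  0, 1, 2, 5, 2, 5, 3, 3, 6, 1, 5, 2, 1, 0;
  0, 1, 4, 9, 5, 13, 5, 6, 14, 6, 12, 7, 2, 1;
  0, 0, 1, 2, 2, 5, 2, 1, 6, 3, 5, 4, 1, 1;
  0, 0, 1, 5, 2, 9, 5, 5, 12, 5, 13, 8, 4, 1;
  0, 0, 0, 1, 1, 4, 2, 2, 7, 4, 8, 6, 2, 1;
  0, 0, 0, 0, 0, 1, 1, 1, 2, 1, 4, 2, 1, 0;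
  0, 0, 0, 0, 0, 0, 0, 0, 1, 1, 1, 1, 0, 0]

def p26 : Matrix (Fin 14) (Fin 14) ℤ :=
  !![0, 0, 0, 1, 0, 1, 1, 0, 1, 0, 0, 0, 0, 0;
  0, 0, 1, 2, 1, 4, 1, 1, 2, 1, 1, 0, 0, 0;
  0, 1, 3, 7, 3, 8, 4, 3, 7, 2, 4, 1, 0, 0;
  1, 2, 7, 12, 6, 14, 5, 6, 13, 5, 9, 4, 1, 0;
  0, 2, 3, 6, 2, 6, 3, 3, 6, 2, 5, 2, 0, 0;
  1, 3, 8, 14, 7, 16, 7, 7, 16, 5, 13, 7, 3, 1;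
  0, 1, 3, 6, 3, 7, 2, 3, 7, 3, 5, 4, 1, 1;
  1, 1, 4, 5, 3, 7, 3, 2, 7, 3, 6, 3, 1, 0;
  1, 3, 7, 13, 5, 16, 7, 7, 16, 7, 14, 8, 3, 1;
  0, 0, 2, 5, 2, 6, 3, 3, 6, 2, 6, 3, 2, 0;
  0, 1, 4, 9, 5, 13, 6, 5, 14, 6, 12, 7, 2, 1;
  0, 0, 1, 4, 2, 7, 3, 4, 8, 3, 7, 3, 1, 0;
  0, 0, 0, 1, 1, 2, 1, 1, 4, 1, 2, 1, 0, 0;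
  0, 0, 0, 0, 0, 1, 0, 1, 1, 0, 1, 0, 0, 0]

def p62 : Matrix (Fin 14) (Fin 14) ℤ :=
  !![0, 0, 0, 1, 0, 1, 0, 1, 1, 0, 0, 0, 0, 0;
  0, 0, 1, 2, 2, 3, 1, 1, 3, 0, 1, 0, 0, 0;
  0, 1, 3, 7, 3, 8, 3, 4, 7, 2, 4, 1, 0, 0;
  1, 2, 7, 12, 6, 14, 6, 5, 13, 5, 9, 4, 1, 0;
  0, 1, 3, 6, 2, 7, 3, 3, 5, 2, 5, 2, 1, 0;
  1, 4, 8, 14, 6, 16, 7, 7, 16, 6, 13, 7, 2, 1;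
  1, 1, 4, 5, 3, 7, 2, 3, 7, 3, 6, 3, 1, 0;
  0, 1, 3, 6, 3, 7, 3, 2, 7, 3, 5, 4, 1, 1;
  1, 2, 7, 13, 6, 16, 7, 7, 16, 6, 14, 8, 4, 1;
  0, 1, 2, 5, 2, 5, 3, 3, 7, 2, 6, 3, 1, 0;
  0, 1, 4, 9, 5, 13, 5, 6, 14, 6, 12, 7, 2, 1;
  0, 0, 1, 4, 2, 7, 4, 3, 8, 3, 7, 3, 1, 0;
  0, 0, 0, 1, 0, 3, 1, 1, 3, 2, 2, 1, 0, 0;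
  0, 0, 0, 0, 0, 1, 1, 0, 1, 0, 1, 0, 0, 0]

def p44 : Matrix (Fin 14) (Fin 14) ℤ :=
  !![1, 1, 3, 4, 2, 4, 1, 1, 3, 1, 1, 0, 0, 0;
  1, 4, 8, 13, 5, 12, 5, 5, 9, 2, 5, 1, 0, 0;
  3, 8, 22, 34, 16, 35, 13, 13, 28, 9, 16, 6, 1, 0;
  4, 13, 34, 60, 26, 63, 26, 26, 55, 18, 38, 16, 5, 1;
  2, 5, 16, 26, 14, 30, 11, 11, 27, 10, 18, 9, 2, 1;
  4, 12, 35, 63, 30, 76, 31, 31, 72, 27, 55, 28, 9, 3;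
  1, 5, 13, 26, 11, 31, 15, 14, 31, 11, 26, 13, 5, 1;
  1, 5, 13, 26, 11, 31, 14, 15, 31, 11, 26, 13, 5, 1;
  3, 9, 28, 55, 27, 72, 31, 31, 76, 30, 63, 35, 12, 4;
  1, 2, 9, 18, 10, 27, 11, 11, 30, 14, 26, 16, 5, 2;
  1, 5, 16, 38, 18, 55, 26, 26, 63, 26, 60, 34, 13, 4;
  0, 1, 6, 16, 9, 28, 13, 13, 35, 16, 34, 22, 8, 3;
  0, 0, 1, 5, 2, 9, 5, 5, 12, 5, 13, 8, 4, 1;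
  0, 0, 0, 1, 1, 3, 1, 1, 4, 2, 4, 3, 1, 1]

def p46 : Matrix (Fin 14) (Fin 14) ℤ :=
  !![0, 1, 2, 4, 2, 4, 2, 2, 4, 1, 3, 1, 0, 0;
  1, 2, 7, 12, 6, 14, 5, 6, 13, 5, 9, 4, 1, 0;
  2, 7, 19, 35, 16, 40, 17, 17, 38, 13, 28, 13, 4, 1;
  4, 12, 35, 63, 30, 76, 31, 31, 72, 27, 55, 28, 9, 3;
  2, 6, 16, 30, 13, 35, 16, 15, 34, 12, 27, 13, 5, 1;
  4, 14, 40, 76, 35, 91, 39, 39, 90, 34, 72, 38, 13, 4;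
  2, 5, 17, 31, 16, 39, 16, 16, 39, 15, 31, 17, 6, 2;
  2, 6, 17, 31, 15, 39, 16, 16, 39, 16, 31, 17, 5, 2;
  4, 13, 38, 72, 34, 90, 39, 39, 91, 35, 76, 40, 14, 4;
  1, 5, 13, 27, 12, 34, 15, 16, 35, 13, 30, 16, 6, 2;
  3, 9, 28, 55, 27, 72, 31, 31, 76, 30, 63, 35, 12, 4;
  1, 4, 13, 28, 13, 38, 17, 17, 40, 16, 35, 19, 7, 2;
  0, 1, 4, 9, 5, 13, 6, 5, 14, 6, 12, 7, 2, 1;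
  0, 0, 1, 3, 1, 4, 2, 2, 4, 2, 4, 2, 1, 0]

def p66 : Matrix (Fin 14) (Fin 14) ℤ :=
  !![1, 1, 3, 4, 2, 5, 2, 2, 5, 2, 4, 2, 1, 0;
  1, 4, 8, 14, 6, 16, 7, 7, 16, 6, 13, 7, 2, 1;
  3, 8, 23, 40, 19, 48, 20, 20, 47, 18, 38, 20, 7, 2;
  4, 14, 40, 76, 35, 91, 39, 39, 90, 34, 72, 38, 13, 4;
  2, 6, 19, 35, 18, 43, 18, 18, 43, 16, 34, 18, 6, 2;
  5, 16, 48, 91, 43, 114, 48, 48, 112, 43, 90, 47, 16, 5;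
  2, 7, 20, 39, 18, 48, 22, 20, 48, 18, 39, 20, 7, 2;
  2, 7, 20, 39, 18, 48, 20, 22, 48, 18, 39, 20, 7, 2;
  5, 16, 47, 90, 43, 112, 48, 48, 114, 43, 91, 48, 16, 5;
  2, 6, 18, 34, 16, 43, 18, 18, 43, 18, 35, 19, 6, 2;
  4, 13, 38, 72, 34, 90, 39, 39, 91, 35, 76, 40, 14, 4;
  2, 7, 20, 38, 18, 47, 20, 20, 48, 19, 40, 23, 8, 3;
  1, 2, 7, 13, 6, 16, 7, 7, 16, 6, 14, 8, 4, 1;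
  0, 1, 2, 4, 2, 5, 2, 2, 5, 2, 4, 3, 1, 1]

def p224 : Matrix (Fin 14) (Fin 14) ℤ :=
  !![0, 1, 2, 4, 1, 2, 1, 1, 1, 0, 0, 0, 0, 0;
  1, 2, 7, 9, 5, 8, 2, 2, 4, 1, 1, 0, 0, 0;
  2, 7, 16, 25, 10, 21, 8, 8, 14, 3, 6, 1, 0, 0;
  4, 9, 25, 38, 18, 39, 14, 14, 31, 10, 17, 6, 1, 0;
  1, 5, 10, 18, 6, 18, 8, 8, 14, 4, 10, 3, 1, 0;
  2, 8, 21, 39, 18, 44, 19, 19, 42, 14, 31, 14, 4, 1;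
  1, 2, 8, 14, 8, 19, 6, 8, 19, 8, 14, 8, 2, 1;
  1, 2, 8, 14, 8, 19, 8, 6, 19, 8, 14, 8, 2, 1;
  1, 4, 14, 31, 14, 42, 19, 19, 44, 18, 39, 21, 8, 2;
  0, 1, 3, 10, 4, 14, 8, 8, 18, 6, 18, 10, 5, 1;
  0, 1, 6, 17, 10, 31, 14, 14, 39, 18, 38, 25, 9, 4;
  0, 0, 1, 6, 3, 14, 8, 8, 21, 10, 25, 16, 7, 2;
  0, 0, 0, 1, 1, 4, 2, 2, 8, 5, 9, 7, 2, 1;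
  0, 0, 0, 0, 0, 1, 1, 1, 2, 1, 4, 2, 1, 0]

def p244 : Matrix (Fin 14) (Fin 14) ℤ :=
  !![1, 4, 8, 13, 5, 12, 5, 5, 9, 2, 5, 1, 0, 0;
  4, 9, 25, 38, 18, 39, 14, 14, 31, 10, 17, 6, 1, 0;
  8, 25, 64, 107, 47, 110, 44, 44, 92, 29, 59, 23, 6, 1;
  13, 38, 107, 183, 86, 204, 81, 81, 182, 64, 127, 59, 17, 5;
  5, 18, 47, 86, 37, 94, 41, 40, 86, 29, 64, 29, 10, 2;
  12, 39, 110, 204, 94, 242, 102, 103, 234, 86, 182, 92, 31, 9;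
  5, 14, 44, 81, 41, 102, 42, 42, 103, 40, 81, 44, 14, 5;
  5, 14, 44, 81, 40, 103, 42, 42, 102, 41, 81, 44, 14, 5;
  9, 31, 92, 182, 86, 234, 103, 102, 242, 94, 204, 110, 39, 12;
  2, 10, 29, 64, 29, 86, 40, 41, 94, 37, 86, 47, 18, 5;
  5, 17, 59, 127, 64, 182, 81, 81, 204, 86, 183, 107, 38, 13;
  1, 6, 23, 59, 29, 92, 44, 44, 110, 47, 107, 64, 25, 8;
  0, 1, 6, 17, 10, 31, 14, 14, 39, 18, 38, 25, 9, 4;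
  0, 0, 1, 5, 2, 9, 5, 5, 12, 5, 13, 8, 4, 1]

def p266 : Matrix (Fin 14) (Fin 14) ℤ :=
  !![1, 4, 8, 14, 6, 16, 7, 7, 16, 6, 13, 7, 2, 1;
  4, 9, 26, 44, 21, 53, 22, 22, 52, 20, 42, 22, 8, 2;
  8, 26, 71, 130, 60, 155, 66, 66, 153, 58, 123, 65, 22, 7;
  14, 44, 130, 242, 115, 296, 125, 125, 292, 111, 234, 123, 42, 13;
  6, 21, 60, 115, 53, 139, 61, 59, 138, 52, 111, 58, 20, 6;
  16, 53, 155, 296, 139, 365, 155, 157, 364, 138, 292, 153, 52, 16;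
  7, 22, 66, 125, 61, 155, 66, 66, 157, 59, 125, 66, 22, 7;
  7, 22, 66, 125, 59, 157, 66, 66, 155, 61, 125, 66, 22, 7;
  16, 52, 153, 292, 138, 364, 157, 155, 365, 139, 296, 155, 53, 16;
  6, 20, 58, 111, 52, 138, 59, 61, 139, 53, 115, 60, 21, 6;
  13, 42, 123, 234, 111, 292, 125, 125, 296, 115, 242, 130, 44, 14;
  7, 22, 65, 123, 58, 153, 66, 66, 155, 60, 130, 71, 26, 8;
  2, 8, 22, 42, 20, 52, 22, 22, 53, 21, 44, 26, 9, 4;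
  1, 2, 7, 13, 6, 16, 7, 7, 16, 6, 14, 8, 4, 1]

def z1 : Matrix (Fin 14) (Fin 14) ℤ :=
  !![1, 0, 0, 0, 0, 0, 0, 0, 0, 0, 0, 0, 0, 0;
  0, 1, 0, 0, 0, 0, 0, 0, 0, 0, 0, 0, 0, 0;
  0, 0, 1, 0, 0, 0, 0, 0, 0, 0, 0, 0, 0, 0;
  0, 0, 0, 1, 0, 0, 0, 0, 0, 0, 0, 0, 0, 0;
  0, 0, 0, 0, 1, 0, 0, 0, 0, 0, 0, 0, 0, 0;
  0, 0, 0, 0, 0, 1, 0, 0, 0, 0, 0, 0, 0, 0;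
  0, 0, 0, 0, 0, 0, 1, 0, 0, 0, 0, 0, 0, 0;
  0, 0, 0, 0, 0, 0, 0, 1, 0, 0, 0, 0, 0, 0;
  0, 0, 0, 0, 0, 0, 0, 0, 1, 0, 0, 0, 0, 0;
  0, 0, 0, 0, 0, 0, 0, 0, 0, 1, 0, 0, 0, 0;
  0, 0, 0, 0, 0, 0, 0, 0, 0, 0, 1, 0, 0, 0;
  0, 0, 0, 0, 0, 0, 0, 0, 0, 0, 0, 1, 0, 0;
  0, 0, 0, 0, 0, 0, 0, 0, 0, 0, 0, 0, 1, 0;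
  0, 0, 0, 0, 0, 0, 0, 0, 0, 0, 0, 0, 0, 1]

def z3 : Matrix (Fin 14) (Fin 14) ℤ :=
  !![0, 0, 1, 0, 0, 0, 0, 0, 0, 0, 0, 0, 0, 0;
  0, 1, 1, 1, 0, 0, 0, 0, 0, 0, 0, 0, 0, 0;
  1, 1, 2, 2, 1, 1, 0, 0, 0, 0, 0, 0, 0, 0;
  0, 1, 2, 3, 1, 2, 1, 1, 1, 0, 0, 0, 0, 0;
  0, 0, 1, 1, 1, 1, 0, 0, 1, 0, 0, 0, 0, 0;
  0, 0, 1, 2, 1, 3, 1, 1, 2, 1, 1, 0, 0, 0;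
  0, 0, 0, 1, 0, 1, 1, 0, 1, 0, 1, 0, 0, 0;
  0, 0, 0, 1, 0, 1, 0, 1, 1, 0, 1, 0, 0, 0;
  0, 0, 0, 1, 1, 2, 1, 1, 3, 1, 2, 1, 0, 0;
  0, 0, 0, 0, 0, 1, 0, 0, 1, 1, 1, 1, 0, 0;
  0, 0, 0, 0, 0, 1, 1, 1, 2, 1, 3, 2, 1, 0;
  0, 0, 0, 0, 0, 0, 0, 0, 1, 1, 2, 2, 1, 1;
  0, 0, 0, 0, 0, 0, 0, 0, 0, 0, 1, 1, 1, 0;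
  0, 0, 0, 0, 0, 0, 0, 0, 0, 0, 0, 1, 0, 0]

def z5 : Matrix (Fin 14) (Fin 14) ℤ :=
  !![0, 0, 0, 0, 1, 0, 0, 0, 0, 0, 0, 0, 0, 0;
  0, 0, 0, 1, 0, 0, 0, 1, 0, 0, 0, 0, 0, 0;
  0, 0, 1, 1, 1, 1, 0, 0, 1, 0, 0, 0, 0, 0;
  0, 1, 1, 2, 0, 2, 1, 1, 1, 0, 1, 0, 0, 0;
  1, 0, 1, 0, 1, 1, 0, 0, 1, 1, 0, 0, 0, 0;
  0, 0, 1, 2, 1, 2, 1, 0, 2, 1, 1, 1, 0, 0;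
  0, 0, 0, 1, 0, 1, 1, 1, 0, 0, 1, 0, 1, 0;
  0, 1, 0, 1, 0, 0, 1, 1, 1, 0, 1, 0, 0, 0;
  0, 0, 1, 1, 1, 2, 0, 1, 2, 1, 2, 1, 0, 0;
  0, 0, 0, 0, 1, 1, 0, 0, 1, 1, 0, 1, 0, 1;
  0, 0, 0, 1, 0, 1, 1, 1, 2, 0, 2, 1, 1, 0;
  0, 0, 0, 0, 0, 1, 0, 0, 1, 1, 1, 1, 0, 0;
  0, 0, 0, 0, 0, 0, 1, 0, 0, 0, 1, 0, 0, 0;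
  0, 0, 0, 0, 0, 0, 0, 0, 0, 1, 0, 0, 0, 0]

def z7 : Matrix (Fin 14) (Fin 14) ℤ :=
  !![0, 0, 0, 0, 0, 0, 1, 0, 0, 0, 0, 0, 0, 0;
  0, 0, 0, 0, 0, 1, 0, 0, 0, 1, 0, 0, 0, 0;
  0, 0, 0, 1, 0, 1, 1, 0, 1, 0, 1, 0, 0, 0;
  0, 0, 1, 1, 1, 2, 0, 1, 2, 1, 1, 1, 0, 0;
  0, 1, 0, 1, 0, 0, 1, 1, 1, 0, 1, 0, 0, 0;
  0, 0, 1, 2, 1, 2, 1, 1, 2, 0, 2, 1, 1, 0;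
  0, 0, 0, 1, 1, 1, 0, 0, 1, 1, 0, 1, 0, 1;
  1, 0, 1, 0, 1, 1, 0, 0, 1, 1, 1, 0, 0, 0;
  0, 1, 1, 2, 0, 2, 1, 1, 2, 1, 2, 1, 0, 0;
  0, 0, 0, 1, 0, 1, 1, 1, 0, 0, 1, 0, 1, 0;
  0, 0, 1, 1, 1, 2, 1, 0, 2, 1, 1, 1, 0, 0;
  0, 0, 0, 1, 0, 1, 0, 1, 1, 0, 1, 0, 0, 0;
  0, 0, 0, 0, 1, 0, 0, 0, 1, 0, 0, 0, 0, 0;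
  0, 0, 0, 0, 0, 0, 0, 1, 0, 0, 0, 0, 0, 0]

def z8 : Matrix (Fin 14) (Fin 14) ℤ :=
  !![0, 0, 0, 0, 0, 0, 0, 1, 0, 0, 0, 0, 0, 0;
  0, 0, 0, 0, 1, 0, 0, 0, 1, 0, 0, 0, 0, 0;
  0, 0, 0, 1, 0, 1, 0, 1, 1, 0, 1, 0, 0, 0;
  0, 0, 1, 1, 1, 2, 1, 0, 2, 1, 1, 1, 0, 0;
  0, 0, 0, 1, 0, 1, 1, 1, 0, 0, 1, 0, 1, 0;
  0, 1, 1, 2, 0, 2, 1, 1, 2, 1, 2, 1, 0, 0;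
  1, 0, 1, 0, 1, 1, 0, 0, 1, 1, 1, 0, 0, 0;
  0, 0, 0, 1, 1, 1, 0, 0, 1, 1, 0, 1, 0, 1;
  0, 0, 1, 2, 1, 2, 1, 1, 2, 0, 2, 1, 1, 0;
  0, 1, 0, 1, 0, 0, 1, 1, 1, 0, 1, 0, 0, 0;
  0, 0, 1, 1, 1, 2, 0, 1, 2, 1, 1, 1, 0, 0;
  0, 0, 0, 1, 0, 1, 1, 0, 1, 0, 1, 0, 0, 0;
  0, 0, 0, 0, 0, 1, 0, 0, 0, 1, 0, 0, 0, 0;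
  0, 0, 0, 0, 0, 0, 1, 0, 0, 0, 0, 0, 0, 0]

def z9 : Matrix (Fin 14) (Fin 14) ℤ :=
  !![0, 0, 0, 0, 0, 0, 0, 0, 1, 0, 0, 0, 0, 0;
  0, 0, 0, 0, 0, 1, 0, 1, 1, 0, 1, 0, 0, 0;
  0, 0, 0, 1, 1, 2, 1, 1, 3, 1, 2, 1, 0, 0;
  0, 0, 1, 3, 1, 4, 2, 2, 4, 2, 4, 2, 1, 0;
  0, 0, 1, 1, 1, 2, 1, 0, 2, 1, 2, 1, 0, 0;
  0, 1, 2, 4, 2, 5, 2, 2, 5, 2, 4, 3, 1, 1;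
  0, 0, 1, 2, 1, 2, 1, 1, 2, 0, 2, 1, 1, 0;
  0, 1, 1, 2, 0, 2, 1, 1, 2, 1, 2, 1, 0, 0;
  1, 1, 3, 4, 2, 5, 2, 2, 5, 2, 4, 2, 1, 0;
  0, 0, 1, 2, 1, 2, 0, 1, 2, 1, 1, 1, 0, 0;
  0, 1, 2, 4, 2, 4, 2, 2, 4, 1, 3, 1, 0, 0;
  0, 0, 1, 2, 1, 3, 1, 1, 2, 1, 1, 0, 0, 0;
  0, 0, 0, 1, 0, 1, 1, 0, 1, 0, 0, 0, 0, 0;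
  0, 0, 0, 0, 0, 1, 0, 0, 0, 0, 0, 0, 0, 0]

def z10 : Matrix (Fin 14) (Fin 14) ℤ :=
  !![0, 0, 0, 0, 0, 0, 0, 0, 0, 1, 0, 0, 0, 0;
  0, 0, 0, 0, 0, 0, 1, 0, 0, 0, 1, 0, 0, 0;
  0, 0, 0, 0, 0, 1, 0, 0, 1, 1, 1, 1, 0, 0;
  0, 0, 0, 1, 0, 1, 1, 1, 2, 0, 2, 1, 1, 0;
  0, 0, 0, 0, 1, 1, 0, 0, 1, 1, 0, 1, 0, 1;
  0, 0, 1, 1, 1, 2, 0, 1, 2, 1, 2, 1, 0, 0;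
  0, 1, 0, 1, 0, 0, 1, 1, 1, 0, 1, 0, 0, 0;
  0, 0, 0, 1, 0, 1, 1, 1, 0, 0, 1, 0, 1, 0;
  0, 0, 1, 2, 1, 2, 1, 0, 2, 1, 1, 1, 0, 0;
  1, 0, 1, 0, 1, 1, 0, 0, 1, 1, 0, 0, 0, 0;
  0, 1, 1, 2, 0, 2, 1, 1, 1, 0, 1, 0, 0, 0;
  0, 0, 1, 1, 1, 1, 0, 0, 1, 0, 0, 0, 0, 0;
  0, 0, 0, 1, 0, 0, 0, 1, 0, 0, 0, 0, 0, 0;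
  0, 0, 0, 0, 1, 0, 0, 0, 0, 0, 0, 0, 0, 0]

def z11 : Matrix (Fin 14) (Fin 14) ℤ :=
  !![0, 0, 0, 0, 0, 0, 0, 0, 0, 0, 1, 0, 0, 0;
  0, 0, 0, 0, 0, 0, 0, 0, 1, 1, 1, 1, 0, 0;
  0, 0, 0, 0, 0, 1, 1, 1, 2, 1, 3, 2, 1, 0;
  0, 0, 0, 1, 1, 3, 1, 1, 4, 2, 4, 3, 1, 1;
  0, 0, 0, 1, 0, 1, 1, 1, 2, 0, 2, 1, 1, 0;
  0, 0, 1, 3, 1, 4, 2, 2, 4, 2, 4, 2, 1, 0;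
  0, 0, 1, 1, 1, 2, 1, 0, 2, 1, 1, 1, 0, 0;
  0, 0, 1, 1, 1, 2, 0, 1, 2, 1, 1, 1, 0, 0;
  0, 1, 2, 4, 2, 4, 2, 2, 4, 1, 3, 1, 0, 0;
  0, 1, 1, 2, 0, 2, 1, 1, 1, 0, 1, 0, 0, 0;
  1, 1, 3, 4, 2, 4, 1, 1, 3, 1, 1, 0, 0, 0;
  0, 1, 2, 3, 1, 2, 1, 1, 1, 0, 0, 0, 0, 0;
  0, 0, 1, 1, 1, 1, 0, 0, 0, 0, 0, 0, 0, 0;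
  0, 0, 0, 1, 0, 0, 0, 0, 0, 0, 0, 0, 0, 0]

def z12 : Matrix (Fin 14) (Fin 14) ℤ :=
  !![0, 0, 0, 0, 0, 0, 0, 0, 0, 0, 0, 1, 0, 0;
  0, 0, 0, 0, 0, 0, 0, 0, 0, 0, 1, 1, 1, 0;
  0, 0, 0, 0, 0, 0, 0, 0, 1, 1, 2, 2, 1, 1;
  0, 0, 0, 0, 0, 1, 1, 1, 2, 1, 3, 2, 1, 0;
  0, 0, 0, 0, 0, 1, 0, 0, 1, 1, 1, 1, 0, 0;
  0, 0, 0, 1, 1, 2, 1, 1, 3, 1, 2, 1, 0, 0;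
  0, 0, 0, 1, 0, 1, 0, 1, 1, 0, 1, 0, 0, 0;
  0, 0, 0, 1, 0, 1, 1, 0, 1, 0, 1, 0, 0, 0;
  0, 0, 1, 2, 1, 3, 1, 1, 2, 1, 1, 0, 0, 0;
  0, 0, 1, 1, 1, 1, 0, 0, 1, 0, 0, 0, 0, 0;
  0, 1, 2, 3, 1, 2, 1, 1, 1, 0, 0, 0, 0, 0;
  1, 1, 2, 2, 1, 1, 0, 0, 0, 0, 0, 0, 0, 0;
  0, 1, 1, 1, 0, 0, 0, 0, 0, 0, 0, 0, 0, 0;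
  0, 0, 1, 0, 0, 0, 0, 0, 0, 0, 0, 0, 0, 0]

def z13 : Matrix (Fin 14) (Fin 14) ℤ :=
  !![0, 0, 0, 0, 0, 0, 0, 0, 0, 0, 0, 0, 1, 0;
  0, 0, 0, 0, 0, 0, 0, 0, 0, 0, 0, 1, 0, 1;
  0, 0, 0, 0, 0, 0, 0, 0, 0, 0, 1, 1, 1, 0;
  0, 0, 0, 0, 0, 0, 0, 0, 1, 1, 1, 1, 0, 0;
  0, 0, 0, 0, 0, 0, 0, 1, 0, 0, 1, 0, 0, 0;
  0, 0, 0, 0, 0, 1, 1, 0, 1, 0, 1, 0, 0, 0;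
  0, 0, 0, 0, 0, 1, 0, 0, 0, 1, 0, 0, 0, 0;
  0, 0, 0, 0, 1, 0, 0, 0, 1, 0, 0, 0, 0, 0;
  0, 0, 0, 1, 0, 1, 0, 1, 1, 0, 0, 0, 0, 0;
  0, 0, 0, 1, 0, 0, 1, 0, 0, 0, 0, 0, 0, 0;
  0, 0, 1, 1, 1, 1, 0, 0, 0, 0, 0, 0, 0, 0;
  0, 1, 1, 1, 0, 0, 0, 0, 0, 0, 0, 0, 0, 0;
  1, 0, 1, 0, 0, 0, 0, 0, 0, 0, 0, 0, 0, 0;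
  0, 1, 0, 0, 0, 0, 0, 0, 0, 0, 0, 0, 0, 0]

def z14 : Matrix (Fin 14) (Fin 14) ℤ :=
  !![0, 0, 0, 0, 0, 0, 0, 0, 0, 0, 0, 0, 0, 1;
  0, 0, 0, 0, 0, 0, 0, 0, 0, 0, 0, 0, 1, 0;
  0, 0, 0, 0, 0, 0, 0, 0, 0, 0, 0, 1, 0, 0;
  0, 0, 0, 0, 0, 0, 0, 0, 0, 0, 1, 0, 0, 0;
  0, 0, 0, 0, 0, 0, 0, 0, 0, 1, 0, 0, 0, 0;
  0, 0, 0, 0, 0, 0, 0, 0, 1, 0, 0, 0, 0, 0;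
  0, 0, 0, 0, 0, 0, 0, 1, 0, 0, 0, 0, 0, 0;
  0, 0, 0, 0, 0, 0, 1, 0, 0, 0, 0, 0, 0, 0;
  0, 0, 0, 0, 0, 1, 0, 0, 0, 0, 0, 0, 0, 0;
  0, 0, 0, 0, 1, 0, 0, 0, 0, 0, 0, 0, 0, 0;
  0, 0, 0, 1, 0, 0, 0, 0, 0, 0, 0, 0, 0, 0;
  0, 0, 1, 0, 0, 0, 0, 0, 0, 0, 0, 0, 0, 0;
  0, 1, 0, 0, 0, 0, 0, 0, 0, 0, 0, 0, 0, 0;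
  1, 0, 0, 0, 0, 0, 0, 0, 0, 0, 0, 0, 0, 0]

def c0 : Matrix (Fin 14) (Fin 14) ℤ :=
  !![0, 0, 0, 0, 0, 0, 0, 0, 0, 0, 0, 0, 0, 0;
  0, 0, 0, 0, 0, 0, 0, 0, 0, 0, 0, 0, 0, 0;
  0, 0, 0, 0, 0, 0, 0, 0, 0, 0, 0, 0, 0, 0;
  0, 0, 0, 0, 0, 0, 0, 0, 0, 0, 0, 0, 0, 0;
  0, 0, 0, 0, 0, 0, -1, 1, 0, 0, 0, 0, 0, 0;
  0, 0, 0, 0, 0, 0, 1, -1, 0, 0, 0, 0, 0, 0;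
  0, 0, 0, 0, 1, -1, 0, 0, 1, -1, 0, 0, 0, 0;
  0, 0, 0, 0, -1, 1, 0, 0, -1, 1, 0, 0, 0, 0;
  0, 0, 0, 0, 0, 0, -1, 1, 0, 0, 0, 0, 0, 0;
  0, 0, 0, 0, 0, 0, 1, -1, 0, 0, 0, 0, 0, 0;
  0, 0, 0, 0, 0, 0, 0, 0, 0, 0, 0, 0, 0, 0;
  0, 0, 0, 0, 0, 0, 0, 0, 0, 0, 0, 0, 0, 0;
  0, 0, 0, 0, 0, 0, 0, 0, 0, 0, 0, 0, 0, 0;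
  0, 0, 0, 0, 0, 0, 0, 0, 0, 0, 0, 0, 0, 0]

def c1 : Matrix (Fin 14) (Fin 14) ℤ :=
  !![0, 0, 0, 0, 0, 0, 0, 0, 0, 0, 0, 0, 0, 0;
  0, 0, 0, 0, 0, 0, 1, -1, 0, 0, 0, 0, 0, 0;
  0, 0, 0, 0, 0, 0, 0, 0, 0, 0, 0, 0, 0, 0;
  0, 0, 0, 0, 0, 0, 0, 0, 0, 0, 0, 0, 0, 0;
  0, 0, 0, 0, 0, 0, 0, 0, 0, 0, 0, 0, 0, 0;
  0, 0, 0, 0, 0, 0, -1, 1, 0, 0, 0, 0, 0, 0;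
  0, -1, 0, 0, 0, 1, 0, 0, -1, 0, 0, 0, 1, 0;
  0, 1, 0, 0, 0, -1, 0, 0, 1, 0, 0, 0, -1, 0;
  0, 0, 0, 0, 0, 0, 1, -1, 0, 0, 0, 0, 0, 0;
  0, 0, 0, 0, 0, 0, 0, 0, 0, 0, 0, 0, 0, 0;
  0, 0, 0, 0, 0, 0, 0, 0, 0, 0, 0, 0, 0, 0;
  0, 0, 0, 0, 0, 0, 0, 0, 0, 0, 0, 0, 0, 0;
  0, 0, 0, 0, 0, 0, -1, 1, 0, 0, 0, 0, 0, 0;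
  0, 0, 0, 0, 0, 0, 0, 0, 0, 0, 0, 0, 0, 0]

def c2 : Matrix (Fin 14) (Fin 14) ℤ :=
  !![0, 0, 0, 0, 0, 0, 0, 0, 0, 0, 0, 0, 0, 0;
  0, 0, 0, 0, 1, -1, 0, 0, 1, -1, 0, 0, 0, 0;
  0, 0, 0, 0, 0, 0, 0, 0, 0, 0, 0, 0, 0, 0;
  0, 0, 0, 0, 0, 0, 0, 0, 0, 0, 0, 0, 0, 0;
  0, -1, 0, 0, 0, 1, 0, 0, -1, 0, 0, 0, 1, 0;
  0, 1, 0, 0, -1, 0, 0, 0, 0, 1, 0, 0, -1, 0;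
  0, 0, 0, 0, 0, 0, 0, 0, 0, 0, 0, 0, 0, 0;
  0, 0, 0, 0, 0, 0, 0, 0, 0, 0, 0, 0, 0, 0;
  0, -1, 0, 0, 1, 0, 0, 0, 0, -1, 0, 0, 1, 0;
  0, 1, 0, 0, 0, -1, 0, 0, 1, 0, 0, 0, -1, 0;
  0, 0, 0, 0, 0, 0, 0, 0, 0, 0, 0, 0, 0, 0;
  0, 0, 0, 0, 0, 0, 0, 0, 0, 0, 0, 0, 0, 0;
  0, 0, 0, 0, -1, 1, 0, 0, -1, 1, 0, 0, 0, 0;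
  0, 0, 0, 0, 0, 0, 0, 0, 0, 0, 0, 0, 0, 0]

def vv : Fin 3 → Fin 14 → ℤ :=
  ![![0,1,0,0,0,-1,0,0,1,0,0,0,-1,0], ![0,0,0,0,1,-1,0,0,1,-1,0,0,0,0], ![0,0,0,0,0,0,1,-1,0,0,0,0,0,0]]

def zJ : Fin 14 → Matrix (Fin 14) (Fin 14) ℤ :=
  ![z1, z2, z3, z4, z5, z6, z7, z8, z9, z10, z11, z12, z13, z14]

def phi : Matrix (Fin 14) (Fin 14) ℤ →+* Matrix (Fin 14) (Fin 14) ℚ :=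
  (Int.castRingHom ℚ).mapMatrix

lemma e22 : z2 * z2 = p22 := by decide
lemma e24 : z2 * z4 = p24 := by decide
lemma e26 : z2 * z6 = p26 := by decide
lemma e62 : z6 * z2 = p62 := by decide
lemma e44 : z4 * z4 = p44 := by decide
lemma e46 : z4 * z6 = p46 := by decide
lemma e66 : z6 * z6 = p66 := by decide
lemma e224 : p22 * z4 = p224 := by decide
lemma e244 : z2 * p44 = p244 := by decide
lemma e266 : z2 * p66 = p266 := by decide

lemma hc2 : M2 = phi z2 := by
  ext i j; fin_cases i <;> fin_cases j <;> rfl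
lemma hc4 : M4 = phi z4 := by
  ext i j; fin_cases i <;> fin_cases j <;> rfl
lemma hc6 : M6 = phi z6 := by
  ext i j; fin_cases i <;> fin_cases j <;> rfl

lemma h1 : M1 = phi z1 := by
  rw [show M1 = 1 from rfl, show z1 = 1 from by decide, _root_.map_one]

lemma h3 : M3 = phi z3 := by
  rw [show M3 = -1 + M2 ^ 2 from rfl, hc2,
    show z3 = -1 + z2 ^ 2 from by simp only [_root_.pow_two, e22]; decide]
  simp only [_root_.map_add, _root_.map_sub, _root_.map_neg, _root_.map_mul, _root_.map_pow, _root_.map_one, _root_.map_ofNat]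

lemma h5 : M5 = phi z5 := by
  rw [show M5 = 1 - M4 - M6 - M2 ^ 2 + M2 * M4 from rfl, hc2, hc4, hc6,
    show z5 = 1 - z4 - z6 - z2 ^ 2 + z2 * z4 from by
      simp only [_root_.pow_two, e22, e24]; decide]
  simp only [_root_.map_add, _root_.map_sub, _root_.map_neg, _root_.map_mul, _root_.map_pow, _root_.map_one, _root_.map_ofNat]

lemma h7 : M7 = phi z7 := by
  rw [show M7 = 1 - M2 - 2 * M4 - M2 ^ 2 - M2 * M4 - M6 * M2 + M2 ^ 2 * M4 from rfl,
    hc2, hc4, hc6,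
    show z7 = 1 - z2 - 2 * z4 - z2 ^ 2 - z2 * z4 - z6 * z2 + z2 ^ 2 * z4 from by
      simp only [_root_.pow_two, e22, e24, e62, e224]; decide]
  simp only [_root_.map_add, _root_.map_sub, _root_.map_neg, _root_.map_mul, _root_.map_pow, _root_.map_one, _root_.map_ofNat]

lemma h8 : M8 = phi z8 := by
  rw [show M8 = 1 - M2 - 2 * M4 - M2 ^ 2 - M2 * M4 - M2 * M6 + M2 ^ 2 * M4 from rfl,
    hc2, hc4, hc6,
    show z8 = 1 - z2 - 2 * z4 - z2 ^ 2 - z2 * z4 - z2 * z6 + z2 ^ 2 * z4 from by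
      simp only [_root_.pow_two, e22, e24, e26, e224]; decide]
  simp only [_root_.map_add, _root_.map_sub, _root_.map_neg, _root_.map_mul, _root_.map_pow, _root_.map_one, _root_.map_ofNat]

lemma h9 : M9 = phi z9 := by
  rw [show M9 = -1 + M2 + M4 - M6 + M2 ^ 2 + M2 * M4 + M2 * M6 + M6 * M2 - M2 ^ 2 * M4 from rfl,
    hc2, hc4, hc6,
    show z9 = -1 + z2 + z4 - z6 + z2 ^ 2 + z2 * z4 + z2 * z6 + z6 * z2 - z2 ^ 2 * z4 from by
      simp only [_root_.pow_two, e22, e24, e26, e62, e224]; decide]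
  simp only [_root_.map_add, _root_.map_sub, _root_.map_neg, _root_.map_mul, _root_.map_pow, _root_.map_one, _root_.map_ofNat]

lemma h10 : M10 = phi z10 := by
  rw [show M10 = 1 - 2 * M2 - 3 * M4 + 2 * M6 - 2 * M2 ^ 2 - 4 * M2 * M4 - 2 * M2 * M6 +
      2 * M4 ^ 2 + M4 * M6 - 2 * M6 * M2 + 3 * M2 ^ 2 * M4 - M2 * M4 ^ 2 from rfl,
    hc2, hc4, hc6,
    show z10 = 1 - 2 * z2 - 3 * z4 + 2 * z6 - 2 * z2 ^ 2 - 4 * z2 * z4 - 2 * z2 * z6 +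
      2 * z4 ^ 2 + z4 * z6 - 2 * z6 * z2 + 3 * z2 ^ 2 * z4 - z2 * z4 ^ 2 from by
      simp only [_root_.pow_two, e22, e24, e26, e62, e44, e46, e224, e244, mul_assoc]
      decide]
  simp only [_root_.map_add, _root_.map_sub, _root_.map_neg, _root_.map_mul, _root_.map_pow, _root_.map_one, _root_.map_ofNat]

lemma h11 : M11 = phi z11 := by
  rw [show M11 = 2 * M4 - M6 + M2 * M4 - M4 ^ 2 - M4 * M6 - 2 * M2 ^ 2 * M4 + M2 * M4 ^ 2 from rfl,
    hc2, hc4, hc6,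
    show z11 = 2 * z4 - z6 + z2 * z4 - z4 ^ 2 - z4 * z6 - 2 * z2 ^ 2 * z4 + z2 * z4 ^ 2 from by
      simp only [_root_.pow_two, e22, e24, e44, e46, e224, e244, mul_assoc]
      decide]
  simp only [_root_.map_add, _root_.map_sub, _root_.map_neg, _root_.map_mul, _root_.map_pow, _root_.map_one, _root_.map_ofNat]

lemma h12 : M12 = phi z12 := by
  rw [show M12 = -1 + M2 - M4 + 3 * M6 + 2 * M2 ^ 2 - M2 * M4 + M4 ^ 2 + 3 * M4 * M6 +
      3 * M2 ^ 2 * M4 - 2 * M2 * M4 ^ 2 from rfl,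
    hc2, hc4, hc6,
    show z12 = -1 + z2 - z4 + 3 * z6 + 2 * z2 ^ 2 - z2 * z4 + z4 ^ 2 + 3 * z4 * z6 +
      3 * z2 ^ 2 * z4 - 2 * z2 * z4 ^ 2 from by
      simp only [_root_.pow_two, e22, e24, e44, e46, e224, e244, mul_assoc]
      decide]
  simp only [_root_.map_add, _root_.map_sub, _root_.map_neg, _root_.map_mul, _root_.map_pow, _root_.map_one, _root_.map_ofNat]

lemma h13 : M13 = phi z13 := by
  rw [show M13 = 1 + M4 - 4 * M6 - 2 * M2 ^ 2 + 3 * M2 * M4 + M2 * M6 - 2 * M4 ^ 2 -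
      4 * M4 * M6 + M6 * M2 + M6 ^ 2 - 3 * M2 ^ 2 * M4 + 2 * M2 * M4 ^ 2 from rfl,
    hc2, hc4, hc6,
    show z13 = 1 + z4 - 4 * z6 - 2 * z2 ^ 2 + 3 * z2 * z4 + z2 * z6 - 2 * z4 ^ 2 -
      4 * z4 * z6 + z6 * z2 + z6 ^ 2 - 3 * z2 ^ 2 * z4 + 2 * z2 * z4 ^ 2 from by
      simp only [_root_.pow_two, e22, e24, e26, e62, e44, e46, e66, e224, e244, mul_assoc]
      decide]
  simp only [_root_.map_add, _root_.map_sub, _root_.map_neg, _root_.map_mul, _root_.map_pow, _root_.map_one, _root_.map_ofNat]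

lemma h14 : M14 = phi z14 := by
  rw [show M14 = 2 - M2 + M4 - 6 * M6 - 2 * M2 ^ 2 + 4 * M2 * M4 + M2 * M6 - 2 * M4 ^ 2 -
      6 * M4 * M6 + M6 * M2 - 2 * M6 ^ 2 - 5 * M2 ^ 2 * M4 + 3 * M2 * M4 ^ 2 +
      M2 * M6 ^ 2 from rfl,
    hc2, hc4, hc6,
    show z14 = 2 - z2 + z4 - 6 * z6 - 2 * z2 ^ 2 + 4 * z2 * z4 + z2 * z6 - 2 * z4 ^ 2 -
      6 * z4 * z6 + z6 * z2 - 2 * z6 ^ 2 - 5 * z2 ^ 2 * z4 + 3 * z2 * z4 ^ 2 +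
      z2 * z6 ^ 2 from by
      simp only [_root_.pow_two, e22, e24, e26, e62, e44, e46, e66, e224, e244, e266, mul_assoc]
      decide]
  simp only [_root_.map_add, _root_.map_sub, _root_.map_neg, _root_.map_mul, _root_.map_pow, _root_.map_one, _root_.map_ofNat]

lemma hMJ : ∀ i, MJ i = phi (zJ i) := by
  intro i
  fin_cases i
  exacts [h1, hc2, h3, hc4, h5, hc6, h7, h8, h9, h10, h11, h12, h13, h14]

lemma kZ : ∀ i j k : Fin 14, zJ i j k - zJ j i k =
    c0 i j * vv 0 k + c1 i j * vv 1 k + c2 i j * vv 2 k := by decide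

def w : Fin 3 → Fin 14 → ℚ := fun l k => ((vv l k : ℤ) : ℚ)

lemma keyQ : ∀ i j k : Fin 14, MJ i j k - MJ j i k =
    ((c0 i j : ℤ) : ℚ) * w 0 k + ((c1 i j : ℤ) : ℚ) * w 1 k + ((c2 i j : ℤ) : ℚ) * w 2 k := by
  intro i j k
  have hi : MJ i j k = ((zJ i j k : ℤ) : ℚ) := by
    rw [hMJ i]
    simp [phi, RingHom.mapMatrix_apply, Matrix.map_apply]
  have hj : MJ j i k = ((zJ j i k : ℤ) : ℚ) := by
    rw [hMJ j]
    simp [phi, RingHom.mapMatrix_apply, Matrix.map_apply]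
  rw [hi, hj]
  show _ = _ * ((vv 0 k : ℤ) : ℚ) + _ * ((vv 1 k : ℤ) : ℚ) + _ * ((vv 2 k : ℤ) : ℚ)
  exact_mod_cast congrArg (fun z : ℤ => (z : ℚ)) (kZ i j k)

lemma htt (i j : Fin 14) : mulJ (t i) (t j) = MJ i j := by
  funext k
  show (∑ i' : Fin 14, ∑ j' : Fin 14, t i i' * t j j' * MJ i' j' k) = MJ i j k
  rw [Finset.sum_eq_single i]
  · rw [Finset.sum_eq_single j]
    · simp [t]
    · intro b _ hb; simp [t, Pi.single_apply, hb]
    · simp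
  · intro b _ hb
    apply Finset.sum_eq_zero
    intro c _
    simp [t, Pi.single_apply, hb]
  · simp

/-- The derived subspace [A, A] of A = ℚ ⊗ J(A₁) has dimension 3 over ℚ. -/
theorem stmt19 :
    Module.finrank ℚ
      (Submodule.span ℚ
        {x : Fin 14 → ℚ | ∃ r s : Fin 14 → ℚ, x = mulJ r s - mulJ s r}) = 3 := by
  have hspan : Submodule.span ℚ
      {x : Fin 14 → ℚ | ∃ r s : Fin 14 → ℚ, x = mulJ r s - mulJ s r}
      = Submodule.span ℚ (Set.range w) := by
    apply le_antisymm
    · rw [Submodule.span_le]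
      rintro x ⟨r, s, rfl⟩
      have hx : mulJ r s - mulJ s r =
          (∑ i : Fin 14, ∑ j : Fin 14, r i * s j * ((c0 i j : ℤ) : ℚ)) • w 0 +
          (∑ i : Fin 14, ∑ j : Fin 14, r i * s j * ((c1 i j : ℤ) : ℚ)) • w 1 +
          (∑ i : Fin 14, ∑ j : Fin 14, r i * s j * ((c2 i j : ℤ) : ℚ)) • w 2 := by
        funext k
        have step1 : (mulJ r s - mulJ s r) k
            = ∑ i : Fin 14, ∑ j : Fin 14, r i * s j * (MJ i j k - MJ j i k) := by
          simp only [Pi.sub_apply, mulJ]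
          simp only [mul_sub, Finset.sum_sub_distrib]
          congr 1
          rw [Finset.sum_comm]
          refine Finset.sum_congr rfl fun j _ => Finset.sum_congr rfl fun i _ => by ring
        rw [step1]
        simp only [keyQ]
        simp only [Pi.add_apply, Pi.smul_apply, smul_eq_mul]
        simp only [mul_add, ← mul_assoc, Finset.sum_add_distrib, ← Finset.sum_mul]
      rw [hx]
      refine Submodule.add_mem _ (Submodule.add_mem _ ?_ ?_) ?_ <;>
        exact Submodule.smul_mem _ _ (Submodule.subset_span ⟨_, rfl⟩)
    · rw [Submodule.span_le]
      rintro x ⟨l, rfl⟩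
      apply Submodule.subset_span
      fin_cases l
      · refine ⟨t 4, t 7, ?_⟩
        rw [htt, htt]
        funext k
        have h := keyQ 4 7 k
        rw [show c0 4 7 = 1 from rfl, show c1 4 7 = 0 from rfl,
          show c2 4 7 = 0 from rfl] at h
        push_cast at h
        simpa using h.symm
      · refine ⟨t 1, t 6, ?_⟩
        rw [htt, htt]
        funext k
        have h := keyQ 1 6 k
        rw [show c0 1 6 = 0 from rfl, show c1 1 6 = 1 from rfl,
          show c2 1 6 = 0 from rfl] at h
        push_cast at h
        simpa using h.symm
      · refine ⟨t 1, t 4, ?_⟩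
        rw [htt, htt]
        funext k
        have h := keyQ 1 4 k
        rw [show c0 1 4 = 0 from rfl, show c1 1 4 = 0 from rfl,
          show c2 1 4 = 1 from rfl] at h
        push_cast at h
        simpa using h.symm
  rw [hspan]
  have li : LinearIndependent ℚ w := by
    rw [Fintype.linearIndependent_iff]
    intro g hg
    have h1 := congrFun hg 1
    have h4 := congrFun hg 4
    have h6 := congrFun hg 6
    simp only [Finset.sum_apply, Pi.smul_apply, smul_eq_mul, Fin.sum_univ_three,
      Pi.zero_apply, w] at h1 h4 h6
    rw [show vv 0 1 = 1 from rfl, show vv 1 1 = 0 from rfl, show vv 2 1 = 0 from rfl] at h1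
    rw [show vv 0 4 = 0 from rfl, show vv 1 4 = 1 from rfl, show vv 2 4 = 0 from rfl] at h4
    rw [show vv 0 6 = 0 from rfl, show vv 1 6 = 0 from rfl, show vv 2 6 = 1 from rfl] at h6
    push_cast at h1 h4 h6
    simp at h1 h4 h6
    intro l
    fin_cases l <;> assumption
  rw [finrank_span_eq_card li]
  simp
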